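/- arXiv:2306.09602 — 2 statements merged into one kernel-verified Lean document; each statement's English description precedes it below -/
import Mathlib

section
/- Let R be a commutative Noetherian ring, σ a finite type, m a monomial order on σ →₀ ℕ, and I an ideal of MvPolynomial σ R. Then the set of terms appearing in minimal head monomials of I, namely {t : σ →₀ ℕ | ∃ c : R, (c,t) ∈ MinMon(HD(I))}, is finite. -/
open MvPolynomial

/-- Head term of a polynomial with respect to a monomial order. -/
noncomputable def MonomialOrder.degree' {σ R : Type*} [CommSemiring R] (m : MonomialOrder σ)
    (p : MvPolynomial σ R) : σ →₀ ℕ :=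
  m.toSyn.symm (p.support.sup fun s => m.toSyn s)

/-- Head coefficient of a polynomial with respect to a monomial order. -/
noncomputable def MonomialOrder.leadCoeff {σ R : Type*} [CommSemiring R] (m : MonomialOrder σ)
    (p : MvPolynomial σ R) : R :=
  p.coeff (m.degree' p)

/-- The set of head monomials of an ideal, as pairs (coefficient, term). -/
def HD {σ R : Type*} [CommRing R] (m : MonomialOrder σ) (I : Ideal (MvPolynomial σ R)) :
    Set (R × (σ →₀ ℕ)) :=
  {ct | ∃ p ∈ I, p ≠ 0 ∧ m.degree' p = ct.2 ∧ m.leadCoeff p = ct.1}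

/-- Divisibility of monomials, represented as pairs (coefficient, term). -/
def MonDvd {σ R : Type*} [CommRing R] (a b : R × (σ →₀ ℕ)) : Prop :=
  a.1 ∣ b.1 ∧ a.2 ≤ b.2

/-- The divisibility-minimal monomials of a set of monomials: those not strictly divided
by any monomial of the set. -/
def MinMon {σ R : Type*} [CommRing R] (S : Set (R × (σ →₀ ℕ))) : Set (R × (σ →₀ ℕ)) :=
  {a ∈ S | ¬ ∃ b ∈ S, MonDvd b a ∧ ¬ MonDvd a b}


/-!
For each term `t`, the leading coefficients at `t` of the polynomials of `I` whose support
lies `≼[m] t` form an ideal `J t` of `R`, and `J` is monotone for the divisibility order on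
terms (multiply by a monomial). If `(c, t)` is a minimal head monomial, `c ∈ J t` but
`c ∉ J t'` for every `t' < t`, so `J t' < J t`. Any map from a well-quasi-order (here, by
Dickson's lemma) to a Noetherian order has only finitely many points where it strictly exceeds
all its values below: infinitely many would contain an increasing sequence, whose image would
be a strictly increasing chain.
-/

theorem Set.finite_setOf_forall_lt_imp_apply_lt {α β : Type*} [PartialOrder α]
    [WellQuasiOrderedLE α] [Preorder β] [WellFoundedGT β] (f : α → β) :
    {a | ∀ b < a, f b < f a}.Finite := by
  by_contra hinf
  let e := Set.Infinite.natEmbedding _ hinf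
  obtain ⟨g, hg⟩ := wellQuasiOrdered_le.exists_monotone_subseq fun n => (e n : α)
  refine not_strictMono_of_wellFoundedGT (fun n => f (e (g n))) fun i j hij => ?_
  have hne : (e (g i) : α) ≠ e (g j) := fun h => hij.ne (g.injective (e.injective (Subtype.ext h)))
  exact (e (g j)).2 _ ((hg i j hij.le).lt_of_ne hne)

namespace MonomialOrder

open scoped MonomialOrder Pointwise

-- `degree'` and `leadCoeff` are definitionally Mathlib's `degree` and `leadingCoeff`.
variable {σ R : Type*} [CommRing R] (m : MonomialOrder σ) (I : Ideal (MvPolynomial σ R))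

theorem fst_ne_zero_of_mem_HD {ct : R × (σ →₀ ℕ)} (h : ct ∈ HD m I) : ct.1 ≠ 0 := by
  obtain ⟨p, -, hp, -, hlc⟩ := h
  exact hlc ▸ m.leadingCoeff_ne_zero_iff.mpr hp

noncomputable def leadCoeffIdeal (t : σ →₀ ℕ) : Ideal R :=
  (I.restrictScalars R ⊓ restrictSupport R {s | s ≼[m] t}).map (lcoeff R t)

theorem mem_leadCoeffIdeal_iff {c : R} {t : σ →₀ ℕ} :
    c ∈ m.leadCoeffIdeal I t ↔ c = 0 ∨ (c, t) ∈ HD m I := by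
  constructor
  · rintro ⟨p, ⟨hpI, hpt⟩, rfl⟩
    by_cases hc : p.coeff t = 0
    · exact Or.inl hc
    have hdeg : m.degree p = t := m.toSyn.injective <| le_antisymm
      (m.degree_le_iff.mpr fun s hs => hpt hs) (m.le_degree (mem_support_iff.mpr hc))
    refine Or.inr ⟨p, hpI, fun hp => hc (by simp [hp]), hdeg, ?_⟩
    change p.coeff (m.degree p) = p.coeff t
    rw [hdeg]
  · rintro (rfl | ⟨p, hpI, -, hdeg, hlc⟩)
    · exact zero_mem _
    change m.degree p = t at hdeg
    refine ⟨p, ⟨hpI, fun s hs => hdeg ▸ m.le_degree hs⟩, ?_⟩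
    rw [lcoeff_apply, ← hdeg]
    exact hlc

theorem leadCoeffIdeal_le_add (t d : σ →₀ ℕ) :
    m.leadCoeffIdeal I t ≤ m.leadCoeffIdeal I (d + t) := by
  rintro _ ⟨p, ⟨hpI, hpt⟩, rfl⟩
  have hsupp : ({d} : Set (σ →₀ ℕ)) + {s | s ≼[m] t} ⊆ {s | s ≼[m] d + t} := by
    rw [Set.singleton_add]
    rintro _ ⟨s, hs, rfl⟩
    change m.toSyn (d + s) ≤ m.toSyn (d + t)
    simpa only [map_add] using add_le_add_right hs _
  refine ⟨monomial d 1 * p, ⟨I.mul_mem_left _ hpI, ?_⟩, by simp [coeff_monomial_mul]⟩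
  refine restrictSupport_mono R hsupp ?_
  rw [restrictSupport_add]
  exact Submodule.mul_mem_mul (by simp) hpt

theorem monotone_leadCoeffIdeal : Monotone (m.leadCoeffIdeal I) := by
  intro t t' h
  obtain ⟨d, rfl⟩ := exists_add_of_le h
  simpa only [add_comm t] using m.leadCoeffIdeal_le_add I t d

theorem leadCoeffIdeal_lt_of_mem_minMon {c : R} {t t' : σ →₀ ℕ} (hmin : (c, t) ∈ MinMon (HD m I))
    (ht' : t' < t) : m.leadCoeffIdeal I t' < m.leadCoeffIdeal I t := by
  obtain ⟨hHD, hnot⟩ := hmin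
  refine (m.monotone_leadCoeffIdeal I ht'.le).lt_of_ne fun heq => ?_
  have hc : c ∈ m.leadCoeffIdeal I t' := heq ▸ (m.mem_leadCoeffIdeal_iff I).mpr (Or.inr hHD)
  obtain hc0 | hHD' := (m.mem_leadCoeffIdeal_iff I).mp hc
  · exact m.fst_ne_zero_of_mem_HD I hHD hc0
  · exact hnot ⟨(c, t'), hHD', ⟨dvd_rfl, ht'.le⟩, fun h => ht'.not_ge h.2⟩

end MonomialOrder

/-- The set of terms appearing in minimal head monomials of an ideal is finite. -/
theorem minMon_terms_finite {σ R : Type*} [CommRing R] [IsNoetherianRing R] [Finite σ]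
    (m : MonomialOrder σ) (I : Ideal (MvPolynomial σ R)) :
    {t : σ →₀ ℕ | ∃ c : R, (c, t) ∈ MinMon (HD m I)}.Finite :=
  (Set.finite_setOf_forall_lt_imp_apply_lt (m.leadCoeffIdeal I)).subset
    fun _ ⟨_, hmin⟩ _ ht' => m.leadCoeffIdeal_lt_of_mem_minMon I hmin ht'
end

section
/- Let R be a commutative Noetherian ring, σ a finite type, m a monomial order on σ →₀ ℕ, and I an ideal of MvPolynomial σ R. For every term t : σ →₀ ℕ, the ideal C(t,I) of R equals the ideal of R generated by the union of the sets D(t',I) over all terms t' dividing t (i.e., t' ≤ t in σ →₀ ℕ). -/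
open MvPolynomial

/-- The coefficients of the minimal head monomials with term dividing t. -/
def D {σ R : Type*} [CommRing R] (m : MonomialOrder σ) (I : Ideal (MvPolynomial σ R))
    (t : σ →₀ ℕ) : Set R :=
  {c : R | (c, t) ∈ MinMon (HD m I)}

/-!
If `t' ≤ t`, multiplying a witness of `(c, t') ∈ HD(I)` by the monomial `X^(t - t')` shows
`(c, t) ∈ HD(I)`; since `C(t, I)` is an ideal, this gives `span ⋃ D(t', I) ⊆ C(t, I)`.
Conversely, over a Noetherian ring strict divisibility of monomials is well founded: `(c, t)`
corresponds to `(cR, t)` in the product of the reversed ideal lattice with `σ →₀ ℕ`. Hence every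
`(c, t) ∈ HD(I)` is divisible by a minimal head monomial `(d, t')`, and then `d ∣ c`,
`d ∈ D(t', I)`, `t' ≤ t`.
-/

open scoped MonomialOrder

section HeadCoefficients

variable {σ R : Type*} [CommRing R] (m : MonomialOrder σ) (I : Ideal (MvPolynomial σ R))

-- `degree'` and `leadCoeff` unfold to Mathlib's `degree` and `leadingCoeff`.
theorem mem_HD_iff {c : R} {t : σ →₀ ℕ} :
    (c, t) ∈ HD m I ↔ ∃ p ∈ I, p ≠ 0 ∧ m.degree p = t ∧ m.leadingCoeff p = c :=
  Iff.rfl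

theorem mem_HD_of_le {c : R} {s t : σ →₀ ℕ} (h : (c, s) ∈ HD m I) (hst : s ≤ t) :
    (c, t) ∈ HD m I := by
  classical
  obtain ⟨p, hpI, hp0, rfl, rfl⟩ := (mem_HD_iff m I).mp h
  have hlc : m.leadingCoeff p ≠ 0 := m.leadingCoeff_ne_zero_iff.mpr hp0
  have : Nontrivial R := nontrivial_of_ne _ _ hlc
  have hlc_mul : m.leadingCoeff (monomial (t - m.degree p) (1 : R)) * m.leadingCoeff p ≠ 0 := by
    rwa [m.leadingCoeff_monomial, one_mul]
  refine (mem_HD_iff m I).mpr ⟨monomial (t - m.degree p) 1 * p, I.mul_mem_left _ hpI, ?_, ?_, ?_⟩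
  · exact m.leadingCoeff_ne_zero_iff.mp <|
      m.leadingCoeff_mul_of_mul_leadingCoeff_ne_zero hlc_mul ▸ hlc_mul
  · rw [m.degree_mul_of_mul_leadingCoeff_ne_zero hlc_mul, m.degree_monomial, if_neg one_ne_zero,
      tsub_add_cancel_of_le hst]
  · rw [m.leadingCoeff_mul_of_mul_leadingCoeff_ne_zero hlc_mul, m.leadingCoeff_monomial, one_mul]

theorem eq_zero_or_mem_HD_iff {c : R} {t : σ →₀ ℕ} :
    c = 0 ∨ (c, t) ∈ HD m I ↔ ∃ p ∈ I, m.degree p ≼[m] t ∧ p.coeff t = c := by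
  rw [mem_HD_iff]
  constructor
  · rintro (rfl | ⟨p, hpI, -, rfl, rfl⟩)
    · exact ⟨0, I.zero_mem, by simp [m.degree_zero, m.zero_le], coeff_zero _⟩
    · exact ⟨p, hpI, le_rfl, rfl⟩
  · rintro ⟨p, hpI, hdeg, rfl⟩
    by_cases hc : p.coeff t = 0
    · exact Or.inl hc
    have hdeg_eq : m.degree p = t :=
      m.toSyn.injective (le_antisymm hdeg (m.le_degree (mem_support_iff.mpr hc)))
    exact Or.inr ⟨p, hpI, fun hp => hc (by simp [hp]), hdeg_eq,
      by rw [MonomialOrder.leadingCoeff, hdeg_eq]⟩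

/-- The ideal `C(t, I)`, realised as the image of `I ∩ {p | m.degree p ≼ t}` under the
coefficient map at `t`. -/
noncomputable def headCoeffIdeal (t : σ →₀ ℕ) : Ideal R :=
  (I.restrictScalars R ⊓ restrictSupport R {d | d ≼[m] t}).map (lcoeff R t)

theorem mem_headCoeffIdeal {c : R} {t : σ →₀ ℕ} :
    c ∈ headCoeffIdeal m I t ↔ c = 0 ∨ (c, t) ∈ HD m I := by
  simp only [headCoeffIdeal, Submodule.mem_map, Submodule.mem_inf, Submodule.restrictScalars_mem,
    mem_restrictSupport_iff, Set.subset_def, Finset.mem_coe, Set.mem_ofPred_eq, ← m.degree_le_iff,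
    lcoeff_apply, and_assoc, eq_zero_or_mem_HD_iff]

end HeadCoefficients

section MonomialDivisibility

variable {σ R : Type*} [CommRing R]

def monDvdKey (a : R × (σ →₀ ℕ)) : (Ideal R)ᵒᵈ × (σ →₀ ℕ) :=
  (OrderDual.toDual (Ideal.span {a.1}), a.2)

theorem monDvd_iff_monDvdKey_le {a b : R × (σ →₀ ℕ)} :
    MonDvd a b ↔ monDvdKey a ≤ monDvdKey b := by
  simp [MonDvd, monDvdKey, Prod.le_def, Ideal.mem_span_singleton]

theorem MonDvd.trans {a b c : R × (σ →₀ ℕ)} (hab : MonDvd a b) (hbc : MonDvd b c) : MonDvd a c :=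
  ⟨hab.1.trans hbc.1, hab.2.trans hbc.2⟩

theorem wellFounded_strictMonDvd [IsNoetherianRing R] :
    WellFounded fun a b : R × (σ →₀ ℕ) => MonDvd a b ∧ ¬MonDvd b a := by
  simp only [monDvd_iff_monDvdKey_le, ← lt_iff_le_not_ge]
  exact InvImage.wf _ wellFounded_lt

theorem exists_mem_minMon_monDvd [IsNoetherianRing R] {S : Set (R × (σ →₀ ℕ))}
    {a : R × (σ →₀ ℕ)} (ha : a ∈ S) : ∃ b ∈ MinMon S, MonDvd b a := by
  obtain ⟨b, ⟨hbS, hba⟩, hmin⟩ :=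
    wellFounded_strictMonDvd.has_min {b ∈ S | MonDvd b a} ⟨a, ha, dvd_rfl, le_rfl⟩
  refine ⟨b, ⟨hbS, ?_⟩, hba⟩
  rintro ⟨x, hxS, hxb, hbx⟩
  exact hmin x ⟨hxS, hxb.trans hba⟩ ⟨hxb, hbx⟩

end MonomialDivisibility

theorem C_eq_span_D_general {σ R : Type*} [CommRing R] [IsNoetherianRing R]
    (m : MonomialOrder σ) (I : Ideal (MvPolynomial σ R)) (t : σ →₀ ℕ) :
    {c : R | c = 0 ∨ (c, t) ∈ HD m I} =
      (Ideal.span (⋃ t' ∈ {t' : σ →₀ ℕ | t' ≤ t}, D m I t') : Set R) := by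
  suffices headCoeffIdeal m I t = Ideal.span (⋃ t' ∈ {t' : σ →₀ ℕ | t' ≤ t}, D m I t') by
    rw [← this]
    ext c
    exact (mem_headCoeffIdeal m I).symm
  apply le_antisymm
  · intro c hc
    obtain rfl | hc := (mem_headCoeffIdeal m I).mp hc
    · exact zero_mem _
    obtain ⟨b, hb, hbc⟩ := exists_mem_minMon_monDvd hc
    exact Ideal.mem_of_dvd _ hbc.1 (Ideal.subset_span (Set.mem_biUnion hbc.2 hb))
  · refine Ideal.span_le.mpr fun c hc => ?_
    obtain ⟨t', ht', hc⟩ := Set.mem_iUnion₂.mp hc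
    exact (mem_headCoeffIdeal m I).mpr (Or.inr (mem_HD_of_le m I hc.1 ht'))

/-- C(t, I) is the ideal generated by the union of the D(t', I) for all terms t' dividing t. -/
theorem C_eq_span_D {σ R : Type*} [CommRing R] [IsNoetherianRing R] [Finite σ]
    (m : MonomialOrder σ) (I : Ideal (MvPolynomial σ R)) (t : σ →₀ ℕ) :
    {c : R | c = 0 ∨ (c, t) ∈ HD m I} =
      (Ideal.span (⋃ t' ∈ {t' : σ →₀ ℕ | t' ≤ t}, D m I t') : Set R) :=
  C_eq_span_D_general m I t
end
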